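/- arXiv:1512.03899 — 2 statements merged into one kernel-verified Lean document; each statement's English description precedes it below -/
import Mathlib

section
/- For any quad-system QS_C = ⟨Q_C, R⟩ and any i ∈ ℕ⁺: (i) dChaseᵢ(QS_C) can be computed from dChaseᵢ₋₁(QS_C) in time O(|R| · ||dChaseᵢ₋₁(QS_C)||^{rs}), where rs = max_{r∈R} ||r|| is the maximal symbol size of a bridge rule in R; and (ii) ||dChaseᵢ(QS_C)|| = O(||dChaseᵢ₋₁(QS_C)|| + ||R||). -/
/-! ## Core formalization: quads, quad-systems, bridge rules, distributed chase,
    distributed interpretation structures, CCQ entailment and safety notions. -/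

/-- A quad over elements of type `C`: context identifier, subject, predicate, object. -/
structure Quad (C : Type) where
  ctx : C
  s : C
  p : C
  o : C

/-- Terms over constants `C`, with variables indexed by naturals. -/
inductive Term (C : Type) : Type
  | var : ℕ → Term C
  | const : C → Term C

/-- A quad pattern: a context identifier together with a triple pattern. -/
structure QuadPattern (C : Type) where
  ctx : C
  s : Term C
  p : Term C
  o : Term C

/-- Constants enriched with Skolem blank nodes: `sk i j w` is the Skolem blank node
generated by the bridge rule with identifier `i`, at its existential variable `j`,
from the instantiated frontier vector `w` (its origin vector). -/
inductive SConst (C : Type) : Type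
  | base : C → SConst C
  | sk : ℕ → ℕ → List (SConst C) → SConst C

/-- Ground quads appearing in the distributed chase. -/
structure GQuad (C : Type) where
  ctx : C
  s : SConst C
  p : SConst C
  o : SConst C

def Term.inst {C : Type} (μ : ℕ → SConst C) : Term C → SConst C
  | .var v => μ v
  | .const a => .base a

def QuadPattern.inst {C : Type} (μ : ℕ → SConst C) (q : QuadPattern C) : GQuad C :=
  ⟨q.ctx, q.s.inst μ, q.p.inst μ, q.o.inst μ⟩

/-- A forall-existential bridge rule: body and head are sets of quad patterns,
`frontier` is the vector `x⃗` of frontier variables and `exVars` the existential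
variables `y⃗` of the head. -/
structure BridgeRule (C : Type) where
  id : ℕ
  body : List (QuadPattern C)
  head : List (QuadPattern C)
  frontier : List ℕ
  exVars : Finset ℕ

def Term.varsOf {C : Type} : Term C → Finset ℕ
  | .var v => {v}
  | .const _ => ∅

def QuadPattern.varsOf {C : Type} (q : QuadPattern C) : Finset ℕ :=
  q.s.varsOf ∪ q.p.varsOf ∪ q.o.varsOf

def patsVars {C : Type} (l : List (QuadPattern C)) : Finset ℕ :=
  l.foldr (fun q s => q.varsOf ∪ s) ∅

/-- Well-formedness of a bridge rule of the form
`∀x⃗∀z⃗ (body(x⃗,z⃗) → ∃y⃗ head(x⃗,y⃗))`. -/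
def BridgeRule.WF {C : Type} (r : BridgeRule C) : Prop :=
  (∀ v ∈ patsVars r.head, v ∉ r.exVars → v ∈ r.frontier) ∧
  (∀ v ∈ r.frontier, v ∈ patsVars r.body) ∧
  (∀ v ∈ r.exVars, v ∉ patsVars r.body ∧ v ∉ r.frontier) ∧
  r.frontier.Nodup

/-- A quad-system: a quad-graph together with a set of bridge rules. -/
structure QuadSystem (C : Type) where
  quads : Set (Quad C)
  rules : Set (BridgeRule C)

/-- Well-formed quad-systems: finitely many quads and rules, well-formed bridge rules
with unique rule identifiers. -/
def QuadSystem.WF {C : Type} (QS : QuadSystem C) : Prop :=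
  (∀ r ∈ QS.rules, r.WF) ∧
  (∀ r ∈ QS.rules, ∀ r' ∈ QS.rules, r.id = r'.id → r = r') ∧
  QS.quads.Finite ∧ QS.rules.Finite

/-- Extension of an assignment mapping each existential variable of `r` to the
corresponding fresh Skolem blank node. -/
def skExt {C : Type} (r : BridgeRule C) (μ : ℕ → SConst C) : ℕ → SConst C :=
  fun v => if v ∈ r.exVars then SConst.sk r.id v (r.frontier.map μ) else μ v

def headSatisfied {C : Type} (r : BridgeRule C) (μ : ℕ → SConst C)
    (I : Set (GQuad C)) : Prop :=
  ∃ ν : ℕ → SConst C, (∀ v, v ∉ r.exVars → ν v = μ v) ∧ ∀ q ∈ r.head, q.inst ν ∈ I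

/-- `(r, μ)` is applicable on `I` iff `body(r)[μ] ⊆ I` and no extension of `μ`
satisfies the head in `I` (restricted chase). -/
def applicable {C : Type} (r : BridgeRule C) (μ : ℕ → SConst C)
    (I : Set (GQuad C)) : Prop :=
  (∀ q ∈ r.body, q.inst μ ∈ I) ∧ ¬ headSatisfied r μ I

/-- The result of applying assignment `μ` to bridge rule `r`. -/
def applyRule {C : Type} (r : BridgeRule C) (μ : ℕ → SConst C) : Set (GQuad C) :=
  {q | ∃ h ∈ r.head, q = h.inst (skExt r μ)}

def Quad.toGQuad {C : Type} (q : Quad C) : GQuad C :=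
  ⟨q.ctx, .base q.s, .base q.p, .base q.o⟩

/-- One iteration of the distributed chase. -/
def chaseStep {C : Type} (QS : QuadSystem C) (I : Set (GQuad C)) : Set (GQuad C) :=
  I ∪ {q | ∃ r ∈ QS.rules, ∃ μ : ℕ → SConst C, applicable r μ I ∧ q ∈ applyRule r μ}

/-- The state of the distributed chase after `n` iterations. -/
def dChaseAt {C : Type} (QS : QuadSystem C) : ℕ → Set (GQuad C)
  | 0 => Quad.toGQuad '' QS.quads
  | n + 1 => chaseStep QS (dChaseAt QS n)

/-- The distributed chase of a quad-system. -/
def dChase {C : Type} (QS : QuadSystem C) : Set (GQuad C) :=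
  ⋃ n, dChaseAt QS n

/-! ### Distributed interpretation structures and entailment -/

/-- A distributed interpretation structure: a common domain, a rigid interpretation of
constants, and for each context a set of triples holding in it. -/
structure Interp (C : Type) where
  Dom : Type
  constInt : C → Dom
  holds : C → Dom → Dom → Dom → Prop

def Term.eval {C : Type} (I : Interp C) (σ : ℕ → I.Dom) : Term C → I.Dom
  | .var v => σ v
  | .const a => I.constInt a

def Interp.satQP {C : Type} (I : Interp C) (σ : ℕ → I.Dom) (q : QuadPattern C) : Prop :=
  I.holds q.ctx (q.s.eval I σ) (q.p.eval I σ) (q.o.eval I σ)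

def Interp.satQuad {C : Type} (I : Interp C) (q : Quad C) : Prop :=
  I.holds q.ctx (I.constInt q.s) (I.constInt q.p) (I.constInt q.o)

def Interp.satRule {C : Type} (I : Interp C) (r : BridgeRule C) : Prop :=
  ∀ σ : ℕ → I.Dom, (∀ q ∈ r.body, I.satQP σ q) →
    ∃ σ' : ℕ → I.Dom, (∀ v, v ∉ r.exVars → σ' v = σ v) ∧ ∀ q ∈ r.head, I.satQP σ' q

def Interp.isModel {C : Type} (I : Interp C) (QS : QuadSystem C) : Prop :=
  (∀ q ∈ QS.quads, I.satQuad q) ∧ ∀ r ∈ QS.rules, I.satRule r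

def QuadSystem.Consistent {C : Type} (QS : QuadSystem C) : Prop :=
  ∃ I : Interp C, I.isModel QS

/-- A (boolean) contextualized conjunctive query: a conjunction of quad patterns,
all of whose variables are existentially quantified. -/
abbrev CCQ (C : Type) : Type := List (QuadPattern C)

def Interp.satCCQ {C : Type} (I : Interp C) (Q : CCQ C) : Prop :=
  ∃ σ : ℕ → I.Dom, ∀ q ∈ Q, I.satQP σ q

/-- CCQ entailment: every model of the quad-system satisfies the query. -/
def entailsCCQ {C : Type} (QS : QuadSystem C) (Q : CCQ C) : Prop :=
  ∀ I : Interp C, I.isModel QS → I.satCCQ Q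

/-! ### Skolem blank nodes: descendants, origin rule ids, origin vectors,
origin contexts, and the safety notions -/

def SConst.isSk {C : Type} : SConst C → Prop
  | .sk _ _ _ => True
  | .base _ => False

/-- `childOf k b`: `k` is a child of the Skolem blank node `b`,
i.e. `k` occurs in the origin vector of `b`. -/
def childOf {C : Type} (k b : SConst C) : Prop :=
  ∃ i j w, b = SConst.sk i j w ∧ k ∈ w

/-- `descOf k b`: `k` is a descendant of `b` (transitive closure of `childOf`). -/
def descOf {C : Type} : SConst C → SConst C → Prop :=
  Relation.TransGen childOf

def occursIn {C : Type} (b : SConst C) (q : GQuad C) : Prop :=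
  q.s = b ∨ q.p = b ∨ q.o = b

def inChase {C : Type} (QS : QuadSystem C) (b : SConst C) : Prop :=
  ∃ q ∈ dChase QS, occursIn b q

def appearsAt {C : Type} (QS : QuadSystem C) (b : SConst C) (n : ℕ) : Prop :=
  ∃ q ∈ dChaseAt QS n, occursIn b q

/-- The origin contexts of a constant: the contexts in which triples containing it
are first generated during the chase construction. -/
def originContexts {C : Type} (QS : QuadSystem C) (b : SConst C) : Set C :=
  {c | ∃ n, (∀ m, m < n → ¬ appearsAt QS b m) ∧
        ∃ q ∈ dChaseAt QS n, occursIn b q ∧ q.ctx = c}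

/-- Isomorphism of two vectors of constants: a bijective renaming of blank nodes
(fixing all non-blank constants) carrying one to the other. -/
def VecIso {C : Type} (v w : List (SConst C)) : Prop :=
  ∃ g : SConst C → SConst C, w = v.map g ∧ (∀ x : SConst C, ¬ x.isSk → g x = x) ∧
    Set.InjOn g {x | x ∈ v ∧ x.isSk}

/-- A quad-system is unsafe iff its dChase contains two distinct Skolem blank nodes,
one a descendant of the other, with the same origin rule id and isomorphic
origin vectors. -/
def QuadSystem.Unsafe {C : Type} (QS : QuadSystem C) : Prop :=
  ∃ i j w j' w', inChase QS (SConst.sk i j w) ∧ inChase QS (SConst.sk i j' w') ∧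
    SConst.sk i j w ≠ SConst.sk i j' w' ∧
    descOf (SConst.sk i j w) (SConst.sk i j' w') ∧ VecIso w w'

def QuadSystem.Safe {C : Type} (QS : QuadSystem C) : Prop := ¬ QS.Unsafe

/-- A quad-system is unmsafe iff its dChase contains two distinct Skolem blank nodes,
one a descendant of the other, with the same origin rule id. -/
def QuadSystem.Unmsafe {C : Type} (QS : QuadSystem C) : Prop :=
  ∃ i j w j' w', inChase QS (SConst.sk i j w) ∧ inChase QS (SConst.sk i j' w') ∧
    SConst.sk i j w ≠ SConst.sk i j' w' ∧
    descOf (SConst.sk i j w) (SConst.sk i j' w')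

def QuadSystem.Msafe {C : Type} (QS : QuadSystem C) : Prop := ¬ QS.Unmsafe

/-- A quad-system is uncsafe iff its dChase contains two distinct Skolem blank nodes,
one a descendant of the other, with the same origin contexts. -/
def QuadSystem.Uncsafe {C : Type} (QS : QuadSystem C) : Prop :=
  ∃ b b' : SConst C, b.isSk ∧ b'.isSk ∧ b ≠ b' ∧ inChase QS b ∧ inChase QS b' ∧
    descOf b b' ∧ originContexts QS b = originContexts QS b'

def QuadSystem.Csafe {C : Type} (QS : QuadSystem C) : Prop := ¬ QS.Uncsafe
/-! ### Symbol sizes -/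

/-- The symbol size of a bridge rule: roughly four symbols per quad pattern. -/
def BridgeRule.size {C : Type} (r : BridgeRule C) : ℕ :=
  4 * (r.body.length + r.head.length)

/-- The symbol size of a set of bridge rules. -/
noncomputable def rulesSize {C : Type} (R : Set (BridgeRule C)) : ℕ :=
  ∑ᶠ r ∈ R, BridgeRule.size r

/-- The symbol size of a (finite) quad-graph. -/
noncomputable def quadsSize {C : Type} (Q : Set (Quad C)) : ℕ := 4 * Q.ncard

/-- The symbol size of a set of ground quads. -/
noncomputable def chaseSize {C : Type} (I : Set (GQuad C)) : ℕ := 4 * I.ncard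

/-- The symbol size of a quad-system. -/
noncomputable def QuadSystem.size {C : Type} (QS : QuadSystem C) : ℕ :=
  quadsSize QS.quads + rulesSize QS.rules
/-! ### Statement: each dChase iteration can be computed in time
`O(|R| · ‖dChase_{i-1}‖^{rs})` (where `rs = max_{r∈R} ‖r‖`), and
`‖dChase_i‖ = O(‖dChase_{i-1}‖ + ‖R‖)`.

The chase of the paper extends, at each iteration, the current state by a single
application of the `≺`-least applicable (bridge rule, assignment) pair; this is
captured by `IsSeqChase`.  The time bound of clause (i) is rendered by its
combinatorial content: the set of all quads obtainable by applying some applicable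
(rule, assignment) pair to `dChase_{i-1}` — the search space explored when computing
iteration `i` — has cardinality at most `K · |R| · (‖dChase_{i-1}‖ + 2)^{rs}`. -/

/-- `rs`: the maximal symbol size of a bridge rule of the quad-system. -/
noncomputable def maxRuleSize {C : Type} (QS : QuadSystem C) : ℕ :=
  sSup (BridgeRule.size '' QS.rules)

/-- A (sequential) dChase sequence: it starts from the quad-graph and, at each step,
either applies one applicable (bridge rule, assignment) pair, or stays put when no
pair is applicable. -/
def IsSeqChase {C : Type} (QS : QuadSystem C) (D : ℕ → Set (GQuad C)) : Prop :=
  D 0 = Quad.toGQuad '' QS.quads ∧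
  ∀ i : ℕ,
    (∃ r ∈ QS.rules, ∃ μ : ℕ → SConst C,
        applicable r μ (D i) ∧ D (i + 1) = D i ∪ applyRule r μ) ∨
    ((∀ r ∈ QS.rules, ∀ μ : ℕ → SConst C, ¬ applicable r μ (D i)) ∧ D (i + 1) = D i)

/-! A rule application `applyRule r μ` depends only on the frontier vector
`r.frontier.map μ`, and when the body of `r` is matched in `I` the entries of that vector
are terms of `I`, of which there are at most `3 * |I|`. So `r` produces at most
`|head r| * (3 * |I|) ^ |frontier r|` quads from `I`. Since `|frontier r| ≤ 3 * |body r|`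
and `|head r| ≤ m ^ |head r|` for `m ≥ 2`, this is at most `m ^ ‖r‖` with `m = ‖I‖ + 2`.
A single chase step adds at most `|head r| ≤ ‖R‖ / 4` quads. -/

section ChaseComplexity

variable {C : Type}

theorem Term.inst_congr {μ ν : ℕ → SConst C} {t : Term C}
    (h : ∀ v ∈ t.varsOf, μ v = ν v) : t.inst μ = t.inst ν := by
  cases t with
  | var v => exact h v (Finset.mem_singleton_self v)
  | const a => rfl

theorem Term.inst_eq_of_mem_varsOf {t : Term C} {v : ℕ} (h : v ∈ t.varsOf)
    (μ : ℕ → SConst C) : t.inst μ = μ v := by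
  cases t with
  | var u => rw [Term.varsOf, Finset.mem_singleton] at h; rw [h]; rfl
  | const a => simp [Term.varsOf] at h

theorem QuadPattern.inst_congr {μ ν : ℕ → SConst C} {q : QuadPattern C}
    (h : ∀ v ∈ q.varsOf, μ v = ν v) : q.inst μ = q.inst ν := by
  simp only [QuadPattern.varsOf, Finset.mem_union] at h
  simp only [QuadPattern.inst, Term.inst_congr fun v hv => h v (.inl (.inl hv)),
    Term.inst_congr fun v hv => h v (.inl (.inr hv)), Term.inst_congr fun v hv => h v (.inr hv)]

theorem mem_patsVars {l : List (QuadPattern C)} {v : ℕ} :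
    v ∈ patsVars l ↔ ∃ q ∈ l, v ∈ q.varsOf := by
  induction l with
  | nil => simp [patsVars]
  | cons q l ih =>
    simp only [patsVars, List.foldr_cons] at ih ⊢
    simp [ih]

theorem Term.card_varsOf_le (t : Term C) : t.varsOf.card ≤ 1 := by
  cases t <;> simp [Term.varsOf]

theorem QuadPattern.card_varsOf_le (q : QuadPattern C) : q.varsOf.card ≤ 3 :=
  calc q.varsOf.card ≤ q.s.varsOf.card + q.p.varsOf.card + q.o.varsOf.card :=
        (Finset.card_union_le _ _).trans (Nat.add_le_add_right (Finset.card_union_le _ _) _)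
    _ ≤ 3 := by linarith [q.s.card_varsOf_le, q.p.card_varsOf_le, q.o.card_varsOf_le]

theorem card_patsVars_le (l : List (QuadPattern C)) : (patsVars l).card ≤ 3 * l.length := by
  induction l with
  | nil => simp [patsVars]
  | cons q l ih =>
    calc (patsVars (q :: l)).card ≤ q.varsOf.card + (patsVars l).card :=
          Finset.card_union_le _ _
      _ ≤ 3 * (q :: l).length := by
          rw [List.length_cons]; linarith [q.card_varsOf_le]

theorem BridgeRule.WF.frontier_length_le {r : BridgeRule C} (hr : r.WF) :
    r.frontier.length ≤ 3 * r.body.length :=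
  calc r.frontier.length = r.frontier.toFinset.card :=
        (List.toFinset_card_of_nodup hr.2.2.2).symm
    _ ≤ (patsVars r.body).card :=
        Finset.card_le_card fun v hv => hr.2.1 v (List.mem_toFinset.1 hv)
    _ ≤ 3 * r.body.length := card_patsVars_le _

theorem BridgeRule.WF.head_length_mul_pow_le {r : BridgeRule C} (hr : r.WF) {m : ℕ}
    (hm : 2 ≤ m) : r.head.length * m ^ r.frontier.length ≤ m ^ r.size :=
  calc r.head.length * m ^ r.frontier.length
      ≤ m ^ r.head.length * m ^ (3 * r.body.length) :=
        Nat.mul_le_mul (Nat.lt_pow_self hm).le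
          (Nat.pow_le_pow_right (by omega) hr.frontier_length_le)
    _ = m ^ (r.head.length + 3 * r.body.length) := (pow_add _ _ _).symm
    _ ≤ m ^ r.size := Nat.pow_le_pow_right (by omega) (by unfold BridgeRule.size; omega)

theorem size_le_maxRuleSize {QS : QuadSystem C} (hR : QS.rules.Finite) {r : BridgeRule C}
    (hr : r ∈ QS.rules) : r.size ≤ maxRuleSize QS :=
  le_csSup (hR.image _).bddAbove ⟨r, hr, rfl⟩

theorem size_le_rulesSize {R : Set (BridgeRule C)} (hR : R.Finite) {r : BridgeRule C}
    (hr : r ∈ R) : r.size ≤ rulesSize R := by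
  rw [rulesSize, ← hR.coe_toFinset, finsum_mem_coe_finset]
  exact Finset.single_le_sum (fun _ _ => Nat.zero_le _) (hR.mem_toFinset.2 hr)

theorem ncard_setOf_mem_le {α : Type*} (l : List α) : {x | x ∈ l}.ncard ≤ l.length := by
  classical
  have : {x | x ∈ l} = ↑l.toFinset := by ext; simp
  rw [this, Set.ncard_coe_finset]
  exact List.toFinset_card_le l

theorem applyRule_eq_image (r : BridgeRule C) (μ : ℕ → SConst C) :
    applyRule r μ = (fun h : QuadPattern C => h.inst (skExt r μ)) '' {h | h ∈ r.head} := by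
  ext q; simp [applyRule, eq_comm]

theorem ncard_applyRule_le (r : BridgeRule C) (μ : ℕ → SConst C) :
    (applyRule r μ).ncard ≤ r.head.length := by
  rw [applyRule_eq_image]
  exact (Set.ncard_image_le r.head.finite_toSet).trans (ncard_setOf_mem_le _)

theorem applyRule_congr {r : BridgeRule C} (hr : r.WF) {μ ν : ℕ → SConst C}
    (h : r.frontier.map μ = r.frontier.map ν) : applyRule r μ = applyRule r ν := by
  have hext : ∀ q ∈ r.head, q.inst (skExt r μ) = q.inst (skExt r ν) := fun q hq =>
    QuadPattern.inst_congr fun v hv => by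
      by_cases hex : v ∈ r.exVars
      · simp only [skExt, if_pos hex, h]
      · simp only [skExt, if_neg hex]
        exact List.map_inj_left.1 h v (hr.1 v (mem_patsVars.2 ⟨q, hq, hv⟩) hex)
  rw [applyRule_eq_image, applyRule_eq_image]
  exact Set.image_congr fun q hq => hext q hq

def termsOf (I : Set (GQuad C)) : Set (SConst C) :=
  GQuad.s '' I ∪ GQuad.p '' I ∪ GQuad.o '' I

theorem Set.Finite.termsOf {I : Set (GQuad C)} (hI : I.Finite) : (termsOf I).Finite :=
  ((hI.image _).union (hI.image _)).union (hI.image _)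

theorem ncard_termsOf_le {I : Set (GQuad C)} (hI : I.Finite) :
    (termsOf I).ncard ≤ 3 * I.ncard :=
  calc (termsOf I).ncard
      ≤ (GQuad.s '' I).ncard + (GQuad.p '' I).ncard + (GQuad.o '' I).ncard :=
        (Set.ncard_union_le _ _).trans (Nat.add_le_add_right (Set.ncard_union_le _ _) _)
    _ ≤ 3 * I.ncard := by
        linarith [Set.ncard_image_le (f := GQuad.s) hI, Set.ncard_image_le (f := GQuad.p) hI,
          Set.ncard_image_le (f := GQuad.o) hI]

theorem apply_mem_termsOf {I : Set (GQuad C)} {q : QuadPattern C} {μ : ℕ → SConst C}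
    (hq : q.inst μ ∈ I) {v : ℕ} (hv : v ∈ q.varsOf) : μ v ∈ termsOf I := by
  simp only [QuadPattern.varsOf, Finset.mem_union] at hv
  rcases hv with (hv | hv) | hv
  · exact .inl (.inl ⟨_, hq, Term.inst_eq_of_mem_varsOf hv μ⟩)
  · exact .inl (.inr ⟨_, hq, Term.inst_eq_of_mem_varsOf hv μ⟩)
  · exact .inr ⟨_, hq, Term.inst_eq_of_mem_varsOf hv μ⟩

def vecsOver {α : Type*} (A : Set α) (n : ℕ) : Set (List α) :=
  {w | w.length = n ∧ ∀ x ∈ w, x ∈ A}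

theorem vecsOver_subset_range {α : Type*} (A : Set α) (n : ℕ) :
    vecsOver A n ⊆ Set.range fun f : Fin n → A => List.ofFn fun i => (f i : α) := by
  rintro w ⟨rfl, hw⟩
  exact ⟨fun i => ⟨w[i], hw _ (List.getElem_mem _)⟩, List.ofFn_getElem⟩

theorem Set.Finite.vecsOver {α : Type*} {A : Set α} (hA : A.Finite) (n : ℕ) :
    (vecsOver A n).Finite :=
  have := hA.to_subtype
  (Set.finite_range _).subset (vecsOver_subset_range A n)

theorem ncard_vecsOver_le {α : Type*} {A : Set α} (hA : A.Finite) (n : ℕ) :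
    (vecsOver A n).ncard ≤ A.ncard ^ n := by
  have := hA.to_subtype
  calc (vecsOver A n).ncard
      ≤ (Set.range fun f : Fin n → A => List.ofFn fun i => (f i : α)).ncard :=
        Set.ncard_le_ncard (vecsOver_subset_range A n) (Set.finite_range _)
    _ ≤ Nat.card (Fin n → A) := by rw [← Nat.card_coe_set_eq]; exact Finite.card_range_le _
    _ = A.ncard ^ n := by rw [Nat.card_fun, Nat.card_coe_set_eq, Nat.card_fin]

-- The default value is only read off for variables outside `fr`.
def frontierAssign (fr : List ℕ) (w : List (SConst C)) : ℕ → SConst C :=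
  fun v => w.getD (fr.idxOf v) (.sk 0 0 [])

theorem map_frontierAssign_map (fr : List ℕ) (μ : ℕ → SConst C) :
    fr.map (frontierAssign fr (fr.map μ)) = fr.map μ := by
  refine List.map_congr_left fun v hv => ?_
  have hidx : fr.idxOf v < fr.length := List.idxOf_lt_length_iff.2 hv
  rw [frontierAssign, List.getD_eq_getElem _ _ (by simpa using hidx), List.getElem_map,
    List.getElem_idxOf hidx]

def matchOutputs (r : BridgeRule C) (I : Set (GQuad C)) : Set (GQuad C) :=
  {q | ∃ μ : ℕ → SConst C, (∀ b ∈ r.body, b.inst μ ∈ I) ∧ q ∈ applyRule r μ}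

theorem BridgeRule.WF.map_frontier_mem_vecsOver {r : BridgeRule C} (hr : r.WF)
    {I : Set (GQuad C)} {μ : ℕ → SConst C} (hμ : ∀ b ∈ r.body, b.inst μ ∈ I) :
    r.frontier.map μ ∈ vecsOver (termsOf I) r.frontier.length := by
  refine ⟨List.length_map _, ?_⟩
  simp only [List.mem_map]
  rintro _ ⟨v, hv, rfl⟩
  obtain ⟨b, hb, hvb⟩ := mem_patsVars.1 (hr.2.1 v hv)
  exact apply_mem_termsOf (hμ b hb) hvb

theorem BridgeRule.WF.matchOutputs_subset_image {r : BridgeRule C} (hr : r.WF)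
    (I : Set (GQuad C)) :
    matchOutputs r I ⊆ (fun p : QuadPattern C × List (SConst C) =>
        p.1.inst (skExt r (frontierAssign r.frontier p.2))) ''
      ({h | h ∈ r.head} ×ˢ vecsOver (termsOf I) r.frontier.length) := by
  rintro q ⟨μ, hμ, hq⟩
  rw [applyRule_congr hr (map_frontierAssign_map r.frontier μ).symm] at hq
  obtain ⟨h, hh, rfl⟩ := hq
  exact ⟨(h, r.frontier.map μ), ⟨hh, hr.map_frontier_mem_vecsOver hμ⟩, rfl⟩

theorem BridgeRule.WF.matchOutputs_finite {r : BridgeRule C} (hr : r.WF) {I : Set (GQuad C)}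
    (hI : I.Finite) : (matchOutputs r I).Finite :=
  ((r.head.finite_toSet.prod (hI.termsOf.vecsOver _)).image _).subset
    (hr.matchOutputs_subset_image I)

theorem BridgeRule.WF.ncard_matchOutputs_le {r : BridgeRule C} (hr : r.WF)
    {I : Set (GQuad C)} (hI : I.Finite) :
    (matchOutputs r I).ncard ≤ r.head.length * (termsOf I).ncard ^ r.frontier.length := by
  have hfin := r.head.finite_toSet.prod (hI.termsOf.vecsOver r.frontier.length)
  calc (matchOutputs r I).ncard
      ≤ ({h | h ∈ r.head} ×ˢ vecsOver (termsOf I) r.frontier.length).ncard :=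
        (Set.ncard_le_ncard (hr.matchOutputs_subset_image I) (hfin.image _)).trans
          (Set.ncard_image_le hfin)
    _ ≤ r.head.length * (termsOf I).ncard ^ r.frontier.length := by
        rw [Set.ncard_prod]
        exact Nat.mul_le_mul (ncard_setOf_mem_le _) (ncard_vecsOver_le hI.termsOf _)

def triggeredQuads (R : Set (BridgeRule C)) (I : Set (GQuad C)) : Set (GQuad C) :=
  {q | ∃ r ∈ R, ∃ μ : ℕ → SConst C, applicable r μ I ∧ q ∈ applyRule r μ}

theorem ncard_triggeredQuads_le {QS : QuadSystem C} (hrules : ∀ r ∈ QS.rules, r.WF)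
    (hR : QS.rules.Finite) {I : Set (GQuad C)} (hI : I.Finite) :
    (triggeredQuads QS.rules I).ncard ≤
      QS.rules.ncard * (chaseSize I + 2) ^ maxRuleSize QS := by
  set m := chaseSize I + 2
  have hsub : triggeredQuads QS.rules I ⊆ ⋃ r ∈ hR.toFinset, matchOutputs r I := by
    rintro q ⟨r, hr, μ, happ, hq⟩
    exact Set.mem_biUnion (hR.mem_toFinset.2 hr) ⟨μ, happ.1, hq⟩
  have hfin : (⋃ r ∈ hR.toFinset, matchOutputs r I).Finite :=
    hR.toFinset.finite_toSet.biUnion fun r hr =>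
      (hrules r (hR.mem_toFinset.1 hr)).matchOutputs_finite hI
  have hper : ∀ r ∈ hR.toFinset, (matchOutputs r I).ncard ≤ m ^ maxRuleSize QS := by
    intro r hr'
    have hr := hR.mem_toFinset.1 hr'
    have hterms : (termsOf I).ncard ≤ m := by
      have := ncard_termsOf_le hI
      simp only [m, chaseSize]
      omega
    calc (matchOutputs r I).ncard ≤ r.head.length * (termsOf I).ncard ^ r.frontier.length :=
          (hrules r hr).ncard_matchOutputs_le hI
      _ ≤ r.head.length * m ^ r.frontier.length := by gcongr
      _ ≤ m ^ r.size := (hrules r hr).head_length_mul_pow_le (by omega)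
      _ ≤ m ^ maxRuleSize QS := Nat.pow_le_pow_right (by omega) (size_le_maxRuleSize hR hr)
  calc (triggeredQuads QS.rules I).ncard ≤ (⋃ r ∈ hR.toFinset, matchOutputs r I).ncard :=
        Set.ncard_le_ncard hsub hfin
    _ ≤ ∑ r ∈ hR.toFinset, (matchOutputs r I).ncard := Finset.set_ncard_biUnion_le _ _
    _ ≤ ∑ _r ∈ hR.toFinset, m ^ maxRuleSize QS := Finset.sum_le_sum hper
    _ = QS.rules.ncard * m ^ maxRuleSize QS := by
        rw [Finset.sum_const, smul_eq_mul, Set.ncard_eq_toFinset_card _ hR]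

theorem IsSeqChase.finite {QS : QuadSystem C} {D : ℕ → Set (GQuad C)} (hD : IsSeqChase QS D)
    (hQ : QS.quads.Finite) (n : ℕ) : (D n).Finite := by
  induction n with
  | zero => rw [hD.1]; exact hQ.image _
  | succ n ih =>
    rcases hD.2 n with ⟨r, -, μ, -, hstep⟩ | ⟨-, hstep⟩
    · rw [hstep, applyRule_eq_image]
      exact ih.union (r.head.finite_toSet.image _)
    · rwa [hstep]

theorem IsSeqChase.chaseSize_succ_le {QS : QuadSystem C} {D : ℕ → Set (GQuad C)}
    (hD : IsSeqChase QS D) (hR : QS.rules.Finite) (n : ℕ) :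
    chaseSize (D (n + 1)) ≤ chaseSize (D n) + rulesSize QS.rules := by
  rcases hD.2 n with ⟨r, hr, μ, -, hstep⟩ | ⟨-, hstep⟩
  · have hunion := Set.ncard_union_le (D n) (applyRule r μ)
    have happly := ncard_applyRule_le r μ
    have hsize := size_le_rulesSize hR hr
    rw [hstep]
    unfold chaseSize
    unfold BridgeRule.size at hsize
    omega
  · rw [hstep]
    omega

end ChaseComplexity

theorem dChase_iteration_complexity :
    ∃ K : ℕ, ∀ (C : Type) (QS : QuadSystem C) (D : ℕ → Set (GQuad C)),
      QS.WF → IsSeqChase QS D → ∀ i : ℕ, 0 < i →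
        -- (i): the search space for computing iteration `i` from iteration `i-1`
        -- has size `O(|R| · ‖dChase_{i-1}‖^{rs})`
        (Set.ncard {q : GQuad C | ∃ r ∈ QS.rules, ∃ μ : ℕ → SConst C,
            applicable r μ (D (i - 1)) ∧ q ∈ applyRule r μ} ≤
          K * QS.rules.ncard * (chaseSize (D (i - 1)) + 2) ^ maxRuleSize QS) ∧
        -- (ii): `‖dChase_i‖ = O(‖dChase_{i-1}‖ + ‖R‖)`
        chaseSize (D i) ≤ K * (chaseSize (D (i - 1)) + rulesSize QS.rules + 1) := by
  refine ⟨1, fun C QS D hWF hD i hi => ?_⟩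
  obtain ⟨hrules, -, hQ, hR⟩ := hWF
  obtain ⟨n, rfl⟩ : ∃ n, i = n + 1 := ⟨i - 1, by omega⟩
  rw [Nat.add_sub_cancel, one_mul, one_mul]
  exact ⟨ncard_triggeredQuads_le hrules hR (hD.finite hQ n),
    (hD.chaseSize_succ_le hR n).trans (Nat.le_succ _)⟩
end

section
/- The contextualized conjunctive query entailment problem over unrestricted quad-systems is undecidable. Specifically, for any two context-free grammars G₁ = ⟨V₁, T, S₁, P₁⟩ and G₂ = ⟨V₂, T, S₂, P₂⟩ over terminals T, one can construct in polynomial time a quad-system QS_c = ⟨{c:(a, rdf:type, C)}, R⟩ — where R encodes each production v → w₁…wₙ as the BR c:(x₁,w₁,x₂) ∧ … ∧ c:(xₙ,wₙ,xₙ₊₁) → c:(x₁,v,xₙ₊₁) and contains, for each terminal tᵢ ∈ T, the BR c:(x, rdf:type, C) → ∃y c:(x,tᵢ,y) ∧ c:(y, rdf:type, C) — such that QS_c ⊨ ∃y c:(a, S₁, y) ∧ c:(a, S₂, y) iff L(G₁) ∩ L(G₂) ≠ ∅; since non-emptiness of intersection of context-free languages is undecidable, so is CCQ entailment. -/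
/-! ### Statement: undecidability of CCQ entailment over unrestricted quad-systems,
via reduction of non-emptiness of the intersection of two context-free languages.
For CFGs `G₁, G₂` over terminals `T`, the quad-system below (with a single context
`c`, encoding each production `v → w₁…wₙ` as the bridge rule
`c:(x₁,w₁,x₂) ∧ … ∧ c:(xₙ,wₙ,xₙ₊₁) → c:(x₁,v,xₙ₊₁)` and containing, for each
terminal `t`, the bridge rule
`c:(x, rdf:type, C) → ∃y c:(x,t,y) ∧ c:(y, rdf:type, C)`) entails
`∃y c:(a,S₁,y) ∧ c:(a,S₂,y)` iff `L(G₁) ∩ L(G₂) ≠ ∅`.  Since the latter problem is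
undecidable, so is CCQ entailment. -/

/-- Constants used in the encoding: terminals, nonterminals of the two grammars, and
the distinguished constants `a`, `rdf:type`, `C` and the context `c`. -/
inductive EncC (T N₁ N₂ : Type) : Type
  | term : T → EncC T N₁ N₂
  | nt1 : N₁ → EncC T N₁ N₂
  | nt2 : N₂ → EncC T N₁ N₂
  | a : EncC T N₁ N₂
  | typ : EncC T N₁ N₂
  | cls : EncC T N₁ N₂
  | ctx : EncC T N₁ N₂

/-- Encoding of a grammar symbol as a constant. -/
def symC {T N₁ N₂ N : Type} (emb : N → EncC T N₁ N₂) : Symbol T N → EncC T N₁ N₂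
  | .terminal t => .term t
  | .nonterminal n => emb n

/-- The bridge rule `c:(x₁,w₁,x₂), …, c:(xₙ,wₙ,xₙ₊₁) → c:(x₁,v,xₙ₊₁)` encoding the
production `v → w₁…wₙ`. -/
def prodBR {T N₁ N₂ N : Type} (emb : N → EncC T N₁ N₂) (pr : ContextFreeRule T N) :
    BridgeRule (EncC T N₁ N₂) where
  id := 0
  body := pr.output.zipIdx.map fun p =>
    ⟨EncC.ctx, Term.var p.2, Term.const (symC emb p.1), Term.var (p.2 + 1)⟩
  head := [⟨EncC.ctx, Term.var 0, Term.const (emb pr.input), Term.var pr.output.length⟩]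
  frontier := [0, pr.output.length]
  exVars := ∅

/-- The bridge rule `c:(x, rdf:type, C) → ∃y c:(x,t,y) ∧ c:(y, rdf:type, C)` for a
terminal `t`. -/
def termBR {T N₁ N₂ : Type} (t : T) : BridgeRule (EncC T N₁ N₂) where
  id := 0
  body := [⟨EncC.ctx, Term.var 0, Term.const EncC.typ, Term.const EncC.cls⟩]
  head := [⟨EncC.ctx, Term.var 0, Term.const (EncC.term t), Term.var 1⟩,
           ⟨EncC.ctx, Term.var 1, Term.const EncC.typ, Term.const EncC.cls⟩]
  frontier := [0]
  exVars := {1}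

/-- The quad-system `QS_c = ⟨{c:(a, rdf:type, C)}, R⟩` encoding the two grammars. -/
def cfgQS {T : Type} (G₁ G₂ : ContextFreeGrammar T) : QuadSystem (EncC T G₁.NT G₂.NT) where
  quads := {⟨EncC.ctx, EncC.a, EncC.typ, EncC.cls⟩}
  rules := {r | (∃ pr ∈ G₁.rules, r = prodBR EncC.nt1 pr) ∨
                (∃ pr ∈ G₂.rules, r = prodBR EncC.nt2 pr) ∨
                (∃ t : T, r = termBR t)}

/-- The boolean CCQ `∃y c:(a, S₁, y) ∧ c:(a, S₂, y)`. -/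
def cfgCQ {T : Type} (G₁ G₂ : ContextFreeGrammar T) : CCQ (EncC T G₁.NT G₂.NT) :=
  [⟨EncC.ctx, Term.const EncC.a, Term.const (EncC.nt1 G₁.initial), Term.var 0⟩,
   ⟨EncC.ctx, Term.const EncC.a, Term.const (EncC.nt2 G₂.initial), Term.var 0⟩]

/-!
In any model of `cfgQS G₁ G₂`, the terminal rules produce, from the interpretation of `a`,
a path labelled by every word `w`, and each production rule turns a path labelled by its
right-hand side into an edge labelled by its left-hand side; hence if `S₁` and `S₂` both
derive `w`, both query atoms are satisfied with `y` the end of the `w`-path. Conversely,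
the query holds in a canonical model whose elements carry words, in which an edge labelled
by a grammar symbol `X` leads from a word `u` to `u ++ z` exactly when `X` derives `z`
(and every other triple holds); the word at the common endpoint of the `S₁`- and
`S₂`-edges from `a` lies in both languages.
-/

open ContextFreeGrammar

namespace Interp

section Path

variable {C : Type} (I : Interp C) (c : C)

def Path : List C → I.Dom → I.Dom → Prop
  | [], d, d' => d = d'
  | p :: l, d, d' => ∃ e, I.holds c d (I.constInt p) e ∧ Path l e d'

variable {I c}

theorem path_singleton {p : C} {d d' : I.Dom} :
    I.Path c [p] d d' ↔ I.holds c d (I.constInt p) d' := by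
  simp [Path]

theorem path_append {l₁ l₂ : List C} {d d' : I.Dom} :
    I.Path c (l₁ ++ l₂) d d' ↔ ∃ e, I.Path c l₁ d e ∧ I.Path c l₂ e d' := by
  induction l₁ generalizing d with
  | nil => simp [Path]
  | cons p l ih =>
    simp only [List.cons_append, Path, ih]
    grind

theorem path_iff_exists_seq {l : List C} {d d' : I.Dom} :
    I.Path c l d d' ↔ ∃ σ : ℕ → I.Dom, σ 0 = d ∧ σ l.length = d' ∧
      ∀ i (hi : i < l.length), I.holds c (σ i) (I.constInt l[i]) (σ (i + 1)) := by
  induction l generalizing d with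
  | nil =>
    exact ⟨fun h => ⟨fun _ => d, rfl, h, nofun⟩,
      fun ⟨_, h₀, hlen, _⟩ => h₀ ▸ hlen⟩
  | cons p l ih =>
    simp only [Path, ih]
    constructor
    · rintro ⟨e, he, σ, rfl, rfl, hσ⟩
      refine ⟨fun | 0 => d | i + 1 => σ i, rfl, rfl, ?_⟩
      rintro (_ | i) hi
      · exact he
      · exact hσ i (Nat.lt_of_succ_lt_succ hi)
    · rintro ⟨σ, rfl, rfl, hσ⟩
      exact ⟨σ 1, hσ 0 (Nat.succ_pos _), fun i => σ (i + 1), rfl, rfl,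
        fun i hi => hσ (i + 1) (Nat.succ_lt_succ hi)⟩

end Path

section Encoding

variable {T N₁ N₂ N : Type} {I : Interp (EncC T N₁ N₂)}

theorem satRule_prodBR_iff {emb : N → EncC T N₁ N₂} {pr : ContextFreeRule T N} :
    I.satRule (prodBR emb pr) ↔ ∀ d d', I.Path .ctx (pr.output.map (symC emb)) d d' →
      I.holds .ctx d (I.constInt (emb pr.input)) d' := by
  have hbody : ∀ σ : ℕ → I.Dom, (∀ q ∈ (prodBR emb pr).body, I.satQP σ q) ↔
      ∀ i (hi : i < (pr.output.map (symC emb)).length),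
        I.holds .ctx (σ i) (I.constInt (pr.output.map (symC emb))[i]) (σ (i + 1)) := by
    intro σ
    simp only [prodBR, List.forall_mem_map, List.forall_mem_zipIdx', List.length_map,
      List.getElem_map]
    rfl
  have hexVars : (prodBR emb pr).exVars = ∅ := rfl
  have hhead : ∀ σ : ℕ → I.Dom, (∀ q ∈ (prodBR emb pr).head, I.satQP σ q) ↔
      I.holds .ctx (σ 0) (I.constInt (emb pr.input))
        (σ (pr.output.map (symC emb)).length) := by
    simp [prodBR, satQP, Term.eval]
  unfold satRule
  simp only [hbody, hhead, hexVars, path_iff_exists_seq, Finset.notMem_empty,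
    not_false_eq_true, forall_const]
  constructor
  · rintro h _ _ ⟨σ, rfl, rfl, hσ⟩
    obtain ⟨σ', hσ', hhead⟩ := h σ hσ
    obtain rfl : σ' = σ := funext hσ'
    exact hhead
  · exact fun h σ hσ => ⟨σ, fun _ => rfl, h _ _ ⟨σ, rfl, rfl, hσ⟩⟩

variable {G : ContextFreeGrammar T} {emb : G.NT → EncC T N₁ N₂}

theorem path_of_produces (hG : ∀ pr ∈ G.rules, I.satRule (prodBR emb pr))
    {α β : List (Symbol T G.NT)} (hαβ : G.Produces α β) {d d' : I.Dom}
    (hβ : I.Path .ctx (β.map (symC emb)) d d') : I.Path .ctx (α.map (symC emb)) d d' := by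
  obtain ⟨pr, hpr, hrw⟩ := hαβ
  obtain ⟨p, q, rfl, rfl⟩ := hrw.exists_parts
  simp only [List.map_append, path_append] at hβ ⊢
  obtain ⟨e₂, ⟨e₁, hp, hout⟩, hq⟩ := hβ
  have hinput := satRule_prodBR_iff.1 (hG pr hpr) e₁ e₂ hout
  exact ⟨e₂, ⟨e₁, hp, path_singleton.2 hinput⟩, hq⟩

theorem path_of_derives (hG : ∀ pr ∈ G.rules, I.satRule (prodBR emb pr))
    {α β : List (Symbol T G.NT)} (hαβ : G.Derives α β) {d d' : I.Dom}
    (hβ : I.Path .ctx (β.map (symC emb)) d d') : I.Path .ctx (α.map (symC emb)) d d' := by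
  induction hαβ with
  | refl => exact hβ
  | tail _ hprod ih => exact ih (path_of_produces hG hprod hβ)

theorem holds_initial_of_mem_language (hG : ∀ pr ∈ G.rules, I.satRule (prodBR emb pr))
    {w : List T} (hw : w ∈ G.language) {d d' : I.Dom}
    (hpath : I.Path .ctx (w.map .term) d d') :
    I.holds .ctx d (I.constInt (emb G.initial)) d' := by
  have hw' : (w.map Symbol.terminal).map (symC emb) = w.map .term := by
    rw [List.map_map]; rfl
  rw [← hw'] at hpath
  exact path_singleton.1 (path_of_derives hG ((mem_language_iff G w).1 hw) hpath)

theorem exists_holds_term_of_satRule_termBR {t : T} (ht : I.satRule (termBR t)) {d : I.Dom}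
    (hd : I.holds .ctx d (I.constInt .typ) (I.constInt .cls)) :
    ∃ e, I.holds .ctx d (I.constInt (.term t)) e ∧
      I.holds .ctx e (I.constInt .typ) (I.constInt .cls) := by
  obtain ⟨σ, hσ, hhead⟩ := ht (fun _ => d) (by simpa [termBR, satQP, Term.eval] using hd)
  have hσ₀ : σ 0 = d := hσ 0 (by simp [termBR])
  simp only [termBR, List.mem_cons, forall_eq_or_imp, satQP, Term.eval, hσ₀] at hhead
  exact ⟨σ 1, hhead.1, hhead.2.1⟩

theorem exists_path_of_satRule_termBR (hT : ∀ t, I.satRule (termBR t)) (w : List T)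
    {d : I.Dom} (hd : I.holds .ctx d (I.constInt .typ) (I.constInt .cls)) :
    ∃ d', I.Path .ctx (w.map .term) d d' := by
  induction w generalizing d with
  | nil => exact ⟨d, rfl⟩
  | cons t w ih =>
    obtain ⟨e, hde, he⟩ := exists_holds_term_of_satRule_termBR (hT t) hd
    obtain ⟨d', hpath⟩ := ih he
    exact ⟨d', e, hde, hpath⟩

end Encoding

end Interp

theorem entailsCCQ_cfgCQ_of_mem_language {T : Type} {G₁ G₂ : ContextFreeGrammar T}
    {w : List T} (hw₁ : w ∈ G₁.language) (hw₂ : w ∈ G₂.language) :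
    entailsCCQ (cfgQS G₁ G₂) (cfgCQ G₁ G₂) := by
  rintro I ⟨hquads, hrules⟩
  obtain ⟨d, hpath⟩ := I.exists_path_of_satRule_termBR
    (fun t => hrules _ (Or.inr (Or.inr ⟨t, rfl⟩))) w (hquads _ rfl)
  refine ⟨fun _ => d, ?_⟩
  simp only [cfgCQ, List.mem_cons, List.not_mem_nil, or_false, forall_eq_or_imp, forall_eq]
  exact ⟨I.holds_initial_of_mem_language
      (fun pr hpr => hrules _ (Or.inl ⟨pr, hpr, rfl⟩)) hw₁ hpath,
    I.holds_initial_of_mem_language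
      (fun pr hpr => hrules _ (Or.inr (Or.inl ⟨pr, hpr, rfl⟩))) hw₂ hpath⟩

namespace ContextFreeGrammar

variable {T : Type} {G : ContextFreeGrammar T}

theorem Derives.append {u v u' v' : List (Symbol T G.NT)} (h : G.Derives u v)
    (h' : G.Derives u' v') : G.Derives (u ++ u') (v ++ v') :=
  (h.append_right u').trans (h'.append_left v)

end ContextFreeGrammar

section Canonical

variable {T : Type} (G₁ G₂ : ContextFreeGrammar T)

def canonHolds (x p y : EncC T G₁.NT G₂.NT × List T) : Prop :=
  match p.1 with
  | .term t => y.2 = x.2 ++ [t]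
  | .nt1 n => ∃ z, y.2 = x.2 ++ z ∧ G₁.Derives [.nonterminal n] (z.map .terminal)
  | .nt2 n => ∃ z, y.2 = x.2 ++ z ∧ G₂.Derives [.nonterminal n] (z.map .terminal)
  | _ => True

def canon : Interp (EncC T G₁.NT G₂.NT) where
  Dom := EncC T G₁.NT G₂.NT × List T
  constInt e := (e, [])
  holds _ := canonHolds G₁ G₂

variable {G₁ G₂} {G : ContextFreeGrammar T} {emb : G.NT → EncC T G₁.NT G₂.NT}

def IsCanonEmbedding (emb : G.NT → EncC T G₁.NT G₂.NT) : Prop :=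
  ∀ n (x y : (canon G₁ G₂).Dom), canonHolds G₁ G₂ x (emb n, []) y ↔
    ∃ z, y.2 = x.2 ++ z ∧ G.Derives [.nonterminal n] (z.map .terminal)

theorem exists_derives_of_canon_path (hemb : IsCanonEmbedding emb) {l : List (Symbol T G.NT)}
    {x y : (canon G₁ G₂).Dom} (hpath : (canon G₁ G₂).Path .ctx (l.map (symC emb)) x y) :
    ∃ z, y.2 = x.2 ++ z ∧ G.Derives l (z.map .terminal) := by
  induction l generalizing x with
  | nil =>
    obtain rfl : x = y := hpath
    exact ⟨[], by simp, Derives.refl _⟩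
  | cons s l ih =>
    obtain ⟨e, hxe, hey⟩ := hpath
    obtain ⟨z, hz, hder⟩ := ih hey
    obtain ⟨z₀, hz₀, hder₀⟩ :
        ∃ z₀, e.2 = x.2 ++ z₀ ∧ G.Derives [s] (z₀.map .terminal) := by
      cases s with
      | terminal t => exact ⟨[t], hxe, Derives.refl _⟩
      | nonterminal n => exact (hemb n x e).1 hxe
    refine ⟨z₀ ++ z, by rw [hz, hz₀, List.append_assoc], ?_⟩
    simpa using hder₀.append hder

theorem canon_satRule_prodBR (hemb : IsCanonEmbedding emb) {pr : ContextFreeRule T G.NT}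
    (hpr : pr ∈ G.rules) : (canon G₁ G₂).satRule (prodBR emb pr) := by
  refine Interp.satRule_prodBR_iff.2 fun d d' hpath => ?_
  obtain ⟨z, hz, hder⟩ := exists_derives_of_canon_path hemb hpath
  exact (hemb pr.input d d').2
    ⟨z, hz, Produces.trans_derives ⟨pr, hpr, ContextFreeRule.Rewrites.input_output⟩ hder⟩

theorem canon_satRule_termBR (t : T) : (canon G₁ G₂).satRule (termBR t) := by
  intro σ _
  let ν : ℕ → (canon G₁ G₂).Dom := Function.update σ 1 (.a, (σ 0).2 ++ [t])
  have hν₀ : ν 0 = σ 0 := Function.update_of_ne zero_ne_one _ _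
  have hν₁ : ν 1 = (.a, (σ 0).2 ++ [t]) := Function.update_self _ _ _
  refine ⟨ν, fun v hv => Function.update_of_ne (by simpa [termBR] using hv) _ _, ?_⟩
  simp only [termBR, List.mem_cons, forall_eq_or_imp, Interp.satQP, Term.eval, hν₀, hν₁]
  exact ⟨rfl, trivial, nofun⟩

variable (G₁ G₂)

theorem canon_isModel : (canon G₁ G₂).isModel (cfgQS G₁ G₂) := by
  refine ⟨by rintro _ rfl; trivial, ?_⟩
  rintro r (⟨pr, hpr, rfl⟩ | ⟨pr, hpr, rfl⟩ | ⟨t, rfl⟩)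
  · exact canon_satRule_prodBR (fun _ _ _ => Iff.rfl) hpr
  · exact canon_satRule_prodBR (fun _ _ _ => Iff.rfl) hpr
  · exact canon_satRule_termBR t

theorem exists_mem_language_of_canon_satCCQ (h : (canon G₁ G₂).satCCQ (cfgCQ G₁ G₂)) :
    ∃ w : List T, w ∈ G₁.language ∧ w ∈ G₂.language := by
  obtain ⟨σ, hσ⟩ := h
  simp only [cfgCQ, List.mem_cons, List.not_mem_nil, or_false, forall_eq_or_imp,
    forall_eq] at hσ
  obtain ⟨⟨z₁, hz₁, hd₁⟩, ⟨z₂, hz₂, hd₂⟩⟩ := hσ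
  refine ⟨(σ 0).2, ?_, ?_⟩
  · rw [mem_language_iff, show (σ 0).2 = z₁ from hz₁]
    exact hd₁
  · rw [mem_language_iff, show (σ 0).2 = z₂ from hz₂]
    exact hd₂

end Canonical

/-- Correctness of the reduction: `QS_c ⊨ ∃y c:(a,S₁,y) ∧ c:(a,S₂,y)` iff
`L(G₁) ∩ L(G₂) ≠ ∅`.  Since non-emptiness of the intersection of context-free
languages is undecidable, CCQ entailment over unrestricted quad-systems is
undecidable. -/
theorem cfg_intersection_reduces_to_ccq_entailment
    {T : Type} (G₁ G₂ : ContextFreeGrammar T) :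
    entailsCCQ (cfgQS G₁ G₂) (cfgCQ G₁ G₂) ↔
      ∃ w : List T, w ∈ G₁.language ∧ w ∈ G₂.language :=
  ⟨fun h => exists_mem_language_of_canon_satCCQ G₁ G₂ (h _ (canon_isModel G₁ G₂)),
    fun ⟨_, hw₁, hw₂⟩ => entailsCCQ_cfgCQ_of_mem_language hw₁ hw₂⟩
end
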